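/- Parity invariant for the adjoint action of normalized circuits: for every nonempty normalized word n over {TH, SH} with evaluation matrix N, there exist a natural number l and integers x0, x1, y0, y1, z0, z1 such that (√2)^l · (N · Z · N†) = (x0 + x1·√2)·X + (y0 + y1·√2)·Y + (z0 + z1·√2)·Z, where x0 is odd and exactly one of y0, z0 is odd (y0 and z0 have opposite parity). -/

import Mathlib

open Matrix Complex

noncomputable section

/-- The Hadamard gate. -/
noncomputable def Hm : Matrix (Fin 2) (Fin 2) ℂ :=
  (Complex.I / (Real.sqrt 2 : ℂ)) • !![1, 1; 1, -1]

/-- The T gate. -/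
noncomputable def Tm : Matrix (Fin 2) (Fin 2) ℂ :=
  !![Complex.exp (-(Real.pi / 8 : ℂ) * Complex.I), 0;
     0, Complex.exp ((Real.pi / 8 : ℂ) * Complex.I)]

/-- The phase gate `S = T²`. -/
noncomputable def Sm : Matrix (Fin 2) (Fin 2) ℂ := Tm * Tm

/-- `A` equals `B` up to a unit-modulus scalar (global phase). -/
def UpToPhase (A B : Matrix (Fin 2) (Fin 2) ℂ) : Prop :=
  ∃ z : ℂ, ‖z‖ = 1 ∧ A = z • B

/-- Evaluation of a word over the alphabet {H, S}. -/
noncomputable def evalHS (w : List Bool) : Matrix (Fin 2) (Fin 2) ℂ :=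
  (w.map (fun b => if b then Hm else Sm)).prod

/-- The Clifford group 𝒞: unitaries equal up to phase to a product of copies of H and S. -/
def Clifford (U : Matrix (Fin 2) (Fin 2) ℂ) : Prop :=
  U ∈ Matrix.unitaryGroup (Fin 2) ℂ ∧ ∃ w : List Bool, UpToPhase U (evalHS w)

/-- The syllables TH and SH. -/
inductive Syl : Type
  | TH : Syl
  | SH : Syl
deriving DecidableEq

/-- Evaluation of a syllable. -/
noncomputable def evalSyl : Syl → Matrix (Fin 2) (Fin 2) ℂ
  | Syl.TH => Tm * Hm
  | Syl.SH => Sm * Hm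

/-- Evaluation of a word over {TH, SH}. -/
noncomputable def evalWord (w : List Syl) : Matrix (Fin 2) (Fin 2) ℂ :=
  (w.map evalSyl).prod

/-- A word is normalized if it is empty, or it ends with TH and
contains no two consecutive SH syllables. -/
def Normalized (w : List Syl) : Prop :=
  w = [] ∨ (w.getLast? = some Syl.TH ∧ ¬ ([Syl.SH, Syl.SH] <:+: w))

/-- A canonical word: normalized and no SH among its first four syllables. -/
def Canonical (w : List Syl) : Prop :=
  Normalized w ∧ Syl.SH ∉ w.take 4

/-- The T-count of a word: the number of TH syllables. -/
def Tcount (w : List Syl) : ℕ := w.count Syl.TH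

/-- Trace distance between two matrices. -/
noncomputable def udist (U V : Matrix (Fin 2) (Fin 2) ℂ) : ℝ :=
  Real.sqrt ((2 - ‖(U * Vᴴ).trace‖) / 2)

/-- Pauli X. -/
def Xm : Matrix (Fin 2) (Fin 2) ℂ := !![0, 1; 1, 0]

/-- Pauli Y. -/
def Ym : Matrix (Fin 2) (Fin 2) ℂ := !![0, -Complex.I; Complex.I, 0]

/-- Pauli Z. -/
def Zm : Matrix (Fin 2) (Fin 2) ℂ := !![1, 0; 0, -1]

def s2 : ℂ := ((Real.sqrt 2 : ℝ) : ℂ)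
lemma hs2 : s2 * s2 = 2 := by
  rw [s2]; norm_cast; exact Real.mul_self_sqrt (by norm_num)
lemma hs0 : s2 ≠ 0 := by rw [s2]; norm_cast; positivity
def aa : ℂ := Complex.exp (-(Real.pi / 8 : ℂ) * Complex.I)
def bb : ℂ := Complex.exp ((Real.pi / 8 : ℂ) * Complex.I)
lemma hab : aa * bb = 1 := by
  rw [aa, bb, ← Complex.exp_add]; ring_nf; exact Complex.exp_zero
lemma ha2 : aa * aa = s2/2 - (s2/2) * Complex.I := by
  rw [aa, ← Complex.exp_add]
  have : -(Real.pi / 8 : ℂ) * Complex.I + -(Real.pi / 8 : ℂ) * Complex.I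
      = ((-(Real.pi/4) : ℝ) : ℂ) * Complex.I := by push_cast; ring
  rw [this, Complex.exp_mul_I, ← Complex.ofReal_cos, ← Complex.ofReal_sin,
    Real.cos_neg, Real.sin_neg, Real.cos_pi_div_four, Real.sin_pi_div_four, s2]
  push_cast; ring
lemma hb2 : bb * bb = s2/2 + (s2/2) * Complex.I := by
  rw [bb, ← Complex.exp_add]
  have : (Real.pi / 8 : ℂ) * Complex.I + (Real.pi / 8 : ℂ) * Complex.I
      = ((Real.pi/4 : ℝ) : ℂ) * Complex.I := by push_cast; ring
  rw [this, Complex.exp_mul_I, ← Complex.ofReal_cos, ← Complex.ofReal_sin,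
    Real.cos_pi_div_four, Real.sin_pi_div_four, s2]
  push_cast; ring
lemma hca : (starRingEnd ℂ) aa = bb := by
  rw [aa, bb, ← Complex.exp_conj]; congr 1
  simp [map_ofNat]
lemma hcb : (starRingEnd ℂ) bb = aa := by
  rw [aa, bb, ← Complex.exp_conj]; congr 1
  simp [map_ofNat]

lemma hcs : (starRingEnd ℂ) s2 = s2 := by rw [s2, Complex.conj_ofReal]
def Mt : Matrix (Fin 2) (Fin 2) ℂ := !![aa, aa; bb, -bb]
def Ms : Matrix (Fin 2) (Fin 2) ℂ := !![aa*aa, aa*aa; bb*bb, -(bb*bb)]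

lemma Th_eq : Tm * Hm = (Complex.I / s2) • Mt := by
  ext i j
  fin_cases i <;> fin_cases j <;>
    simp [Tm, Hm, Mt, aa, bb, s2, Matrix.mul_apply, Fin.sum_univ_two] <;> ring
lemma Sh_eq : Sm * Hm = (Complex.I / s2) • Ms := by
  ext i j
  fin_cases i <;> fin_cases j <;>
    simp [Sm, Tm, Hm, Ms, aa, bb, s2, Matrix.mul_apply, Fin.sum_univ_two] <;> ring

lemma conj_smul_form (M N : Matrix (Fin 2) (Fin 2) ℂ) :
    ((Complex.I / s2) • M) * N * ((Complex.I / s2) • M)ᴴ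
      = (2⁻¹ : ℂ) • (M * N * Mᴴ) := by
  rw [Matrix.conjTranspose_smul, Matrix.smul_mul, Matrix.smul_mul, Matrix.mul_smul,
    smul_smul]
  congr 1
  rw [show star (Complex.I / s2) = (starRingEnd ℂ) (Complex.I / s2) from rfl,
    map_div₀, Complex.conj_I, hcs]
  rw [div_mul_div_comm]
  rw [show Complex.I * -Complex.I = 1 by linear_combination -Complex.I_sq, hs2]
  norm_num

lemma MtX : Mt * Xm * Mtᴴ = (2:ℂ) • Zm := by
  ext i j
  fin_cases i <;> fin_cases j <;>
    simp [Mt, Xm, Zm, Matrix.mul_apply, Fin.sum_univ_two, Matrix.conjTranspose_apply,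
      hca, hcb]
  · linear_combination 2*hab
  · linear_combination -2*hab
lemma MtY : Mt * Ym * Mtᴴ = s2 • (Xm - Ym) := by
  ext i j
  fin_cases i <;> fin_cases j <;>
    simp [Mt, Ym, Xm, Matrix.mul_apply, Fin.sum_univ_two, Matrix.conjTranspose_apply,
      hca, hcb]
  · linear_combination 2*Complex.I*ha2 - s2*Complex.I_sq
  · linear_combination -2*Complex.I*hb2 - s2*Complex.I_sq
lemma MtZ : Mt * Zm * Mtᴴ = s2 • (Xm + Ym) := by
  ext i j
  fin_cases i <;> fin_cases j <;>
    simp [Mt, Zm, Xm, Ym, Matrix.mul_apply, Fin.sum_univ_two, Matrix.conjTranspose_apply,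
      hca, hcb]
  · linear_combination 2*ha2
  · linear_combination 2*hb2
lemma MsX : Ms * Xm * Msᴴ = (2:ℂ) • Zm := by
  ext i j
  fin_cases i <;> fin_cases j <;>
    simp [Ms, Xm, Zm, Matrix.mul_apply, Fin.sum_univ_two, Matrix.conjTranspose_apply,
      hca, hcb]
  · linear_combination (2*aa*bb+2)*hab
  · linear_combination (-2*aa*bb-2)*hab
lemma MsY : Ms * Ym * Msᴴ = (2:ℂ) • Xm := by
  ext i j
  fin_cases i <;> fin_cases j <;>
    simp [Ms, Ym, Xm, Matrix.mul_apply, Fin.sum_univ_two, Matrix.conjTranspose_apply,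
      hca, hcb]
  · linear_combination (2*Complex.I*(aa*aa + s2/2 - (s2/2)*Complex.I))*ha2 + ((s2*s2/2)*Complex.I - s2*s2)*Complex.I_sq + hs2
  · linear_combination (-2*Complex.I*(bb*bb + s2/2 + (s2/2)*Complex.I))*hb2 + (-(s2*s2/2)*Complex.I - s2*s2)*Complex.I_sq + hs2
lemma MsZ : Ms * Zm * Msᴴ = (2:ℂ) • Ym := by
  ext i j
  fin_cases i <;> fin_cases j <;>
    simp [Ms, Zm, Xm, Ym, Matrix.mul_apply, Fin.sum_univ_two, Matrix.conjTranspose_apply,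
      hca, hcb]
  · linear_combination (2*(aa*aa + s2/2 - (s2/2)*Complex.I))*ha2 + (s2*s2/2)*Complex.I_sq - Complex.I*hs2
  · linear_combination (2*(bb*bb + s2/2 + (s2/2)*Complex.I))*hb2 + (s2*s2/2)*Complex.I_sq + Complex.I*hs2

lemma thX : (Tm*Hm) * Xm * (Tm*Hm)ᴴ = Zm := by
  rw [Th_eq, conj_smul_form, MtX, smul_smul]
  norm_num
lemma thY : s2 • ((Tm*Hm) * Ym * (Tm*Hm)ᴴ) = Xm - Ym := by
  rw [Th_eq, conj_smul_form, MtY, smul_smul, smul_smul,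
    show s2 * 2⁻¹ * s2 = 1 by linear_combination hs2/2, one_smul]
lemma thZ : s2 • ((Tm*Hm) * Zm * (Tm*Hm)ᴴ) = Xm + Ym := by
  rw [Th_eq, conj_smul_form, MtZ, smul_smul, smul_smul,
    show s2 * 2⁻¹ * s2 = 1 by linear_combination hs2/2, one_smul]
lemma shX : (Sm*Hm) * Xm * (Sm*Hm)ᴴ = Zm := by
  rw [Sh_eq, conj_smul_form, MsX, smul_smul]
  norm_num
lemma shY : (Sm*Hm) * Ym * (Sm*Hm)ᴴ = Xm := by
  rw [Sh_eq, conj_smul_form, MsY, smul_smul]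
  norm_num
lemma shZ : (Sm*Hm) * Zm * (Sm*Hm)ᴴ = Ym := by
  rw [Sh_eq, conj_smul_form, MsZ, smul_smul]
  norm_num
lemma TH_conj (A : Matrix (Fin 2) (Fin 2) ℂ) (α β γ : ℂ)
    (h : A = α • Xm + β • Ym + γ • Zm) :
    s2 • ((Tm*Hm) * A * (Tm*Hm)ᴴ)
      = (β+γ) • Xm + (γ-β) • Ym + (s2*α) • Zm := by
  subst h
  have : (Tm*Hm) * (α • Xm + β • Ym + γ • Zm) * (Tm*Hm)ᴴ
      = α • ((Tm*Hm) * Xm * (Tm*Hm)ᴴ) + β • ((Tm*Hm) * Ym * (Tm*Hm)ᴴ)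
        + γ • ((Tm*Hm) * Zm * (Tm*Hm)ᴴ) := by
    simp only [Matrix.mul_add, Matrix.add_mul, Matrix.mul_smul, Matrix.smul_mul]
  rw [this, smul_add, smul_add, thX, smul_comm s2 β, smul_comm s2 γ, thY, thZ,
    smul_smul]
  module

lemma SH_conj (A : Matrix (Fin 2) (Fin 2) ℂ) (α β γ : ℂ)
    (h : A = α • Xm + β • Ym + γ • Zm) :
    (Sm*Hm) * A * (Sm*Hm)ᴴ = β • Xm + γ • Ym + α • Zm := by
  subst h
  have : (Sm*Hm) * (α • Xm + β • Ym + γ • Zm) * (Sm*Hm)ᴴ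
      = α • ((Sm*Hm) * Xm * (Sm*Hm)ᴴ) + β • ((Sm*Hm) * Ym * (Sm*Hm)ᴴ)
        + γ • ((Sm*Hm) * Zm * (Sm*Hm)ᴴ) := by
    simp only [Matrix.mul_add, Matrix.add_mul, Matrix.mul_smul, Matrix.smul_mul]
  rw [this, shX, shY, shZ]
  module
lemma key : ∀ (w : List Syl), Normalized w → w ≠ [] →
    ∃ (l : ℕ) (x0 x1 y0 y1 z0 z1 : ℤ),
      (s2 ^ l • (evalWord w * Zm * (evalWord w)ᴴ) =
        ((x0:ℂ)+(x1:ℂ)*s2) • Xm + ((y0:ℂ)+(y1:ℂ)*s2) • Ym + ((z0:ℂ)+(z1:ℂ)*s2) • Zm)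
      ∧ Odd x0 ∧
      ((w.head? = some Syl.TH ∧ Odd y0 ∧ Even z0) ∨
       (w.head? = some Syl.SH ∧ Even y0 ∧ Odd z0)) := by
  intro w
  induction w with
  | nil => intro _ h; exact absurd rfl h
  | cons s t ih =>
    intro hn _
    rcases hn with h | ⟨hlast, hinf⟩
    · exact absurd h (by simp)
    rcases eq_or_ne t [] with rfl | ht
    · -- singleton word: s must be TH
      have hs : s = Syl.TH := by simpa using hlast
      subst hs
      refine ⟨1, 1, 0, 1, 0, 0, 0, ?_, ⟨0, by ring⟩, Or.inl ⟨rfl, ⟨0, by ring⟩, ⟨0, rfl⟩⟩⟩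
      have he : evalWord [Syl.TH] = Tm * Hm := by
        simp [evalWord, evalSyl]
      rw [he, pow_one]
      rw [TH_conj (Zm) 0 0 1 (by module)]
      push_cast
      module
    · -- t nonempty normalized
      have hnt : Normalized t := by
        right
        constructor
        · rcases t with _ | ⟨u, t'⟩
          · exact absurd rfl ht
          · rwa [List.getLast?_cons_cons] at hlast
        · intro hi
          rcases hi with ⟨p, q, hpq⟩
          exact hinf ⟨s :: p, q, by simp [← hpq]⟩
      obtain ⟨l, x0, x1, y0, y1, z0, z1, heq, hx, hcase⟩ := ih hnt ht
      have heval : evalWord (s :: t) = evalSyl s * evalWord t := by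
        simp [evalWord]
      have hyz : (Odd y0 ∧ Even z0) ∨ (Even y0 ∧ Odd z0) := by
        rcases hcase with ⟨_, h1, h2⟩ | ⟨_, h1, h2⟩
        · exact Or.inl ⟨h1, h2⟩
        · exact Or.inr ⟨h1, h2⟩
      have hconj : evalWord (s :: t) * Zm * (evalWord (s :: t))ᴴ
          = evalSyl s * (evalWord t * Zm * (evalWord t)ᴴ) * (evalSyl s)ᴴ := by
        rw [heval, Matrix.conjTranspose_mul]
        noncomm_ring
      cases s with
      | TH =>
        refine ⟨l + 1, y0 + z0, y1 + z1, z0 - y0, z1 - y1, 2 * x1, x0, ?_, ?_, ?_⟩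
        · have step := TH_conj (s2 ^ l • (evalWord t * Zm * (evalWord t)ᴴ))
            ((x0:ℂ)+(x1:ℂ)*s2) ((y0:ℂ)+(y1:ℂ)*s2) ((z0:ℂ)+(z1:ℂ)*s2) heq
          rw [Matrix.mul_smul, Matrix.smul_mul] at step
          rw [hconj, pow_succ, mul_comm (s2 ^ l) s2, mul_smul]
          simp only [evalSyl]
          rw [step]
          have e1 : ((y0:ℂ)+(y1:ℂ)*s2) + ((z0:ℂ)+(z1:ℂ)*s2)
              = ((↑(y0+z0):ℂ)+(↑(y1+z1):ℂ)*s2) := by push_cast; ring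
          have e2 : ((z0:ℂ)+(z1:ℂ)*s2) - ((y0:ℂ)+(y1:ℂ)*s2)
              = ((↑(z0-y0):ℂ)+(↑(z1-y1):ℂ)*s2) := by push_cast; ring
          have e3 : s2 * ((x0:ℂ)+(x1:ℂ)*s2)
              = ((↑(2*x1):ℂ)+(↑x0:ℂ)*s2) := by push_cast; linear_combination (x1:ℂ)*hs2
          rw [e1, e2, e3]
        · rcases hyz with ⟨h1, h2⟩ | ⟨h1, h2⟩
          · exact h1.add_even h2
          · exact h1.add_odd h2
        · refine Or.inl ⟨rfl, ?_, ⟨x1, by ring⟩⟩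
          rcases hyz with ⟨h1, h2⟩ | ⟨h1, h2⟩
          · exact h2.sub_odd h1
          · exact h2.sub_even h1
      | SH =>
        -- head of t must be TH
        have hth : t.head? = some Syl.TH ∧ Odd y0 ∧ Even z0 := by
          rcases hcase with h | ⟨hh, _, _⟩
          · exact h
          · exfalso
            apply hinf
            rcases t with _ | ⟨u, t'⟩
            · exact absurd rfl ht
            · have : u = Syl.SH := by simpa using hh
              subst this
              exact ⟨[], t', rfl⟩
        refine ⟨l, y0, y1, z0, z1, x0, x1, ?_, hth.2.1, Or.inr ⟨rfl, hth.2.2, hx⟩⟩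
        have step := SH_conj (s2 ^ l • (evalWord t * Zm * (evalWord t)ᴴ))
          ((x0:ℂ)+(x1:ℂ)*s2) ((y0:ℂ)+(y1:ℂ)*s2) ((z0:ℂ)+(z1:ℂ)*s2) heq
        rw [Matrix.mul_smul, Matrix.smul_mul] at step
        rw [hconj]
        simp only [evalSyl]
        rw [step]

theorem parity_invariant (n : List Syl) (hn : Normalized n) (hne : n ≠ []) :
    ∃ (l : ℕ) (x0 x1 y0 y1 z0 z1 : ℤ),
      ((Real.sqrt 2 : ℂ)) ^ l • (evalWord n * Zm * (evalWord n)ᴴ) =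
        ((x0 : ℂ) + (x1 : ℂ) * (Real.sqrt 2 : ℂ)) • Xm +
        ((y0 : ℂ) + (y1 : ℂ) * (Real.sqrt 2 : ℂ)) • Ym +
        ((z0 : ℂ) + (z1 : ℂ) * (Real.sqrt 2 : ℂ)) • Zm ∧
      Odd x0 ∧ (Odd y0 ↔ ¬ Odd z0) := by
  obtain ⟨l, x0, x1, y0, y1, z0, z1, heq, hx, hcase⟩ := key n hn hne
  refine ⟨l, x0, x1, y0, y1, z0, z1, heq, hx, ?_⟩
  rcases hcase with ⟨_, h1, h2⟩ | ⟨_, h1, h2⟩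
  · exact ⟨fun _ => Int.not_odd_iff_even.mpr h2, fun _ => h1⟩
  · exact ⟨fun hy => absurd hy (Int.not_odd_iff_even.mpr h1), fun h => absurd h2 h⟩


end
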